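/- Let 0 < ε₀ < 1, ε₀ ≠ 1/2, 0 < q < 1, and define i(ε₀,ε₁) = H₂(p) − q H₂(ε₀) − (1−q) H₂(ε₁) with p = q(1−ε₀)+(1−q)ε₁ held fixed under the perturbation ε₀ → ε₀+δ, ε₁ → ε₁ + qδ/(1−q). Then for sufficiently small δ > 0, −2q[H₂'(ε₀)+H₂'(ε₁)]·δ ≤ i(ε₀+δ, ε₁+qδ/(1−q)) − i(ε₀,ε₁) ≤ −(1/2)·q[H₂'(ε₀)+H₂'(ε₁)]·δ, provided H₂'(ε₀)+H₂'(ε₁) > 0. -/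

import Mathlib

/-- Binary entropy function (in bits). -/
noncomputable def H2 (x : ℝ) : ℝ :=
  -(x * Real.logb 2 x) - ((1 - x) * Real.logb 2 (1 - x))

/-- Derivative of the binary entropy function: `H₂'(x) = log₂((1−x)/x)`. -/
noncomputable def H2' (x : ℝ) : ℝ := Real.logb 2 ((1 - x) / x)

/-- Mutual information `i(ε₀,ε₁) = H₂(p) − q H₂(ε₀) − (1−q) H₂(ε₁)` with
`p = q(1−ε₀)+(1−q)ε₁`. -/
noncomputable def iFun (q e0 e1 : ℝ) : ℝ :=
  H2 (q * (1 - e0) + (1 - q) * e1) - q * H2 e0 - (1 - q) * H2 e1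

/-!
Along the perturbation `δ ↦ (ε₀ + δ, ε₁ + qδ/(1−q))` the weight `p` is constant, so only the
terms `−q H₂(ε₀ + δ) − (1−q) H₂(ε₁ + qδ/(1−q))` of `i` vary, and their derivative at `δ = 0`
is `−q (H₂'(ε₀) + H₂'(ε₁)) < 0`. Since this lies strictly between `−2q(H₂'(ε₀) + H₂'(ε₁))` and
`−q(H₂'(ε₀) + H₂'(ε₁))/2`, so does the difference quotient for all small `δ > 0`.
-/

open Filter Topology Real

theorem HasDerivAt.exists_mul_lt_sub_lt {f : ℝ → ℝ} {f' x a b : ℝ} (hf : HasDerivAt f f' x)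
    (ha : a < f') (hb : f' < b) :
    ∃ δ0 > 0, ∀ δ, 0 < δ → δ < δ0 →
      a * δ < f (x + δ) - f x ∧ f (x + δ) - f x < b * δ := by
  obtain ⟨δ0, hδ0, hsub⟩ := mem_nhdsGT_iff_exists_Ioo_subset.mp
    (hf.tendsto_slope_zero_right.eventually (Ioo_mem_nhds ha hb))
  refine ⟨δ0, hδ0, fun δ hδ hδδ0 => ?_⟩
  obtain ⟨h1, h2⟩ := hsub ⟨hδ, hδδ0⟩
  rw [smul_eq_mul, ← div_eq_inv_mul] at h1 h2
  exact ⟨(lt_div_iff₀ hδ).mp h1, (div_lt_iff₀ hδ).mp h2⟩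

theorem H2_eq_binEntropy_div_log_two : H2 = fun x => binEntropy x / log 2 := by
  funext x
  simp only [H2, binEntropy, logb, log_inv]
  ring

theorem H2'_eq_log_sub_log_div {x : ℝ} (hx₀ : x ≠ 0) (hx₁ : x ≠ 1) :
    H2' x = (log (1 - x) - log x) / log 2 := by
  rw [H2', logb, log_div (sub_ne_zero.mpr hx₁.symm) hx₀]

theorem hasDerivAt_H2 {x : ℝ} (hx₀ : x ≠ 0) (hx₁ : x ≠ 1) : HasDerivAt H2 (H2' x) x := by
  rw [H2_eq_binEntropy_div_log_two, H2'_eq_log_sub_log_div hx₀ hx₁]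
  exact (hasDerivAt_binEntropy hx₀ hx₁).div_const _

section Perturbation

variable {q e0 e1 : ℝ}

theorem iFun_perturb_eq (hq : q ≠ 1) (δ : ℝ) :
    iFun q (e0 + δ) (e1 + q * δ / (1 - q)) =
      H2 (q * (1 - e0) + (1 - q) * e1) - q * H2 (e0 + δ) - (1 - q) * H2 (e1 + q * δ / (1 - q)) := by
  have hweight : q * (1 - (e0 + δ)) + (1 - q) * (e1 + q * δ / (1 - q)) =
      q * (1 - e0) + (1 - q) * e1 := by
    field_simp [sub_ne_zero.mpr hq.symm]
    ring
  rw [iFun, hweight]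

theorem hasDerivAt_iFun_perturb (hq : q ≠ 1) (he0₀ : e0 ≠ 0) (he0₁ : e0 ≠ 1)
    (he1₀ : e1 ≠ 0) (he1₁ : e1 ≠ 1) :
    HasDerivAt (fun δ => iFun q (e0 + δ) (e1 + q * δ / (1 - q)))
      (-(q * (H2' e0 + H2' e1))) 0 := by
  simp only [iFun_perturb_eq hq]
  have h0 : HasDerivAt (fun δ => H2 (e0 + δ)) (H2' e0) 0 := by
    exact HasDerivAt.comp_const_add e0 0 (by simpa using hasDerivAt_H2 he0₀ he0₁)
  have h1 : HasDerivAt (fun δ => H2 (e1 + q * δ / (1 - q))) (H2' e1 * (q / (1 - q))) 0 := by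
    have hlin : HasDerivAt (fun δ => e1 + q * δ / (1 - q)) (q / (1 - q)) 0 := by
      simpa using (((hasDerivAt_id (0 : ℝ)).const_mul q).div_const (1 - q)).const_add e1
    exact (hasDerivAt_H2 he1₀ he1₁).comp_of_eq 0 hlin (by simp)
  refine (((hasDerivAt_const (0 : ℝ) (H2 (q * (1 - e0) + (1 - q) * e1))).sub
    (h0.const_mul q)).sub (h1.const_mul (1 - q))).congr_deriv ?_
  field_simp [sub_ne_zero.mpr hq.symm]
  ring

end Perturbation

theorem stmt_14_general (q e0 e1 : ℝ) (hq : 0 < q) (hq1 : q < 1)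
    (he0 : 0 < e0) (he0' : e0 < 1)
    (he1 : 0 < e1) (he1' : e1 < 1)
    (hpos : 0 < H2' e0 + H2' e1) :
    ∃ δ0 > 0, ∀ δ : ℝ, 0 < δ → δ < δ0 →
      -2 * q * (H2' e0 + H2' e1) * δ ≤
          iFun q (e0 + δ) (e1 + q * δ / (1 - q)) - iFun q e0 e1 ∧
      iFun q (e0 + δ) (e1 + q * δ / (1 - q)) - iFun q e0 e1 ≤
          -(1/2) * q * (H2' e0 + H2' e1) * δ := by
  have hqS : 0 < q * (H2' e0 + H2' e1) := mul_pos hq hpos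
  obtain ⟨δ0, hδ0, hbounds⟩ :=
    (hasDerivAt_iFun_perturb hq1.ne he0.ne' he0'.ne he1.ne' he1'.ne).exists_mul_lt_sub_lt
      (a := -2 * q * (H2' e0 + H2' e1)) (b := -(1/2) * q * (H2' e0 + H2' e1))
      (by linarith) (by linarith)
  refine ⟨δ0, hδ0, fun δ hδ hδδ0 => ?_⟩
  simpa using (hbounds δ hδ hδδ0).imp le_of_lt le_of_lt

/-- first-order Taylor estimate for the change in mutual
information under the weight-preserving perturbation
`ε₀ → ε₀+δ`, `ε₁ → ε₁ + qδ/(1−q)`. -/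
theorem stmt_14 (q e0 e1 : ℝ) (hq : 0 < q) (hq1 : q < 1)
    (he0 : 0 < e0) (he0' : e0 < 1) (he0h : e0 ≠ 1/2)
    (he1 : 0 < e1) (he1' : e1 < 1)
    (hpos : 0 < H2' e0 + H2' e1) :
    ∃ δ0 > 0, ∀ δ : ℝ, 0 < δ → δ < δ0 →
      -2 * q * (H2' e0 + H2' e1) * δ ≤
          iFun q (e0 + δ) (e1 + q * δ / (1 - q)) - iFun q e0 e1 ∧
      iFun q (e0 + δ) (e1 + q * δ / (1 - q)) - iFun q e0 e1 ≤
          -(1/2) * q * (H2' e0 + H2' e1) * δ :=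
  stmt_14_general q e0 e1 hq hq1 he0 he0' he1 he1' hpos
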